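/- arXiv:1607.04936 — 11 statements merged into one kernel-verified Lean document; each statement's English description precedes it below -/
import Mathlib

section
/- Let V be a vector space with bilinear operations ∘, ∗, [·,·] such that x ∗ y = 2(x ∘ y) for all x,y. Then the nine compatibility conditions (t1)-(t9) of Theorem 3.2 hold if and only if the following five identities hold for all x,y,z ∈ V: (r1) (x∘y)∘z = x∘(y∘z); (r2) x∘(y∘z) = y∘(x∘z); (r3) 2x∘[y,z] = [x∘y,z] + [y,x∘z]; (r4) 2[x,y]∘z = [x,y∘z] - [y,x∘z]; (r5) [x,y]∘z = -x∘[y,z] + y∘[x,z]. -/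
/-!
After substituting `x ∗ y = 2 (x ∘ y)`, every condition (t1)-(t9) becomes an integer linear
relation among the trilinear expressions `(x∘y)∘z`, `x∘(y∘z)`, `y∘(x∘z)` and their bracket
analogues at the same `x, y, z`. Conditions (t1)-(t6) involve `∘` alone and span the same
relations as (r1), (r2); conditions (t7)-(t9) span the same relations as (r3)-(r5). Both
directions are therefore explicit linear combinations, valid over any commutative ring.
-/

section

variable {R V : Type*} [CommRing R] [AddCommGroup V] [Module R V]

theorem t1_to_t6_iff_assoc_and_left_comm (c s : V →ₗ[R] V →ₗ[R] V)
    (hs : ∀ x y : V, s x y = (2:R) • c x y) (x y z : V) :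
    (c (c x y) z + s (c x y) z
        = -c x (c y z) + c x (s y z) - (c y (s x z) - s y (s x z)) ∧
      c (c x y) z = -(-s y (c x z) + c y (c x z)) ∧
      c (s x y) z = -c x (c y z) + ((2:R) • s y (c x z) - c y (c x z)) ∧
      s (c x y) z = -s x (c y z) + s x (s y z) ∧
      s (s x y) z = -((2:R) • s x (c y z)) + s x (s y z) + s y (s x z) ∧
      -s x (c y z) + s y (c x z) = 0) ↔
    (c (c x y) z = c x (c y z) ∧ c x (c y z) = c y (c x z)) := by
  simp only [hs, map_smul, LinearMap.smul_apply]
  constructor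
  · rintro ⟨t1, t2, -⟩
    exact ⟨by linear_combination (norm := module) t1 - (2:R) • t2,
      by linear_combination (norm := module) -t1 + (3:R) • t2⟩
  · rintro ⟨r1, r2⟩
    refine ⟨?_, ?_, ?_, ?_, ?_, ?_⟩
    · linear_combination (norm := module) (3:R) • r1 + (2:R) • r2
    · linear_combination (norm := module) r1 + r2
    · linear_combination (norm := module) (2:R) • r1 + (3:R) • r2
    · linear_combination (norm := module) (2:R) • r1
    · linear_combination (norm := module) (4:R) • r1 + (4:R) • r2
    · linear_combination (norm := module) (-2:R) • r2

theorem t7_to_t9_iff_r3_to_r5 (c s br : V →ₗ[R] V →ₗ[R] V)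
    (hs : ∀ x y : V, s x y = (2:R) • c x y) (x y z : V) :
    (s (br x y) z + br (c x y) z
        = -br x (c y z) + br x (s y z) + s x (br y z) - br y (s x z) ∧
      c (br x y) z + br (c x y) z
        = c x (br y z) - (br y (c x z) + c y (br x z) - s y (br x z)) ∧
      br (s x y) z = -br x (c y z) + s x (br y z) - (br y (c x z) - s y (br x z))) ↔
    ((2:R) • c x (br y z) = br (c x y) z + br y (c x z) ∧
      (2:R) • c (br x y) z = br x (c y z) - br y (c x z) ∧
      c (br x y) z = -c x (br y z) + c y (br x z)) := by
  simp only [hs, map_smul, LinearMap.smul_apply]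
  constructor
  · rintro ⟨t7, t8, t9⟩
    refine ⟨?_, ?_, ?_⟩
    · linear_combination (norm := module) -t7 + (2:R) • t8 - t9
    · linear_combination (norm := module) (2:R) • t8 - t9
    · linear_combination (norm := module) -t7 + (3:R) • t8 - t9
  · rintro ⟨r3, r4, r5⟩
    refine ⟨?_, ?_, ?_⟩
    · linear_combination (norm := module) -r3 + r4
    · linear_combination (norm := module) -r3 + r5
    · linear_combination (norm := module) (-2:R) • r3 - r4 + (2:R) • r5

end

theorem t_conditions_iff_r_conditions_general {V : Type*} [AddCommGroup V] [Module ℂ V]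
    (c s br : V →ₗ[ℂ] V →ₗ[ℂ] V)
    (hs : ∀ x y : V, s x y = (2:ℂ) • c x y) :
    (∀ x y z : V,
      -- (t1)
      c (c x y) z + s (c x y) z
        = -c x (c y z) + c x (s y z) - (c y (s x z) - s y (s x z)) ∧
      -- (t2)
      c (c x y) z = -(-s y (c x z) + c y (c x z)) ∧
      -- (t3)
      c (s x y) z = -c x (c y z) + ((2:ℂ) • s y (c x z) - c y (c x z)) ∧
      -- (t4)
      s (c x y) z = -s x (c y z) + s x (s y z) ∧
      -- (t5)
      s (s x y) z = -((2:ℂ) • s x (c y z)) + s x (s y z) + s y (s x z) ∧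
      -- (t6)
      -s x (c y z) + s y (c x z) = 0 ∧
      -- (t7)
      s (br x y) z + br (c x y) z
        = -br x (c y z) + br x (s y z) + s x (br y z) - br y (s x z) ∧
      -- (t8)
      c (br x y) z + br (c x y) z
        = c x (br y z) - (br y (c x z) + c y (br x z) - s y (br x z)) ∧
      -- (t9)
      br (s x y) z = -br x (c y z) + s x (br y z) - (br y (c x z) - s y (br x z)))
    ↔
    (∀ x y z : V,
      -- (r1)
      c (c x y) z = c x (c y z) ∧
      -- (r2)
      c x (c y z) = c y (c x z) ∧
      -- (r3)
      (2:ℂ) • c x (br y z) = br (c x y) z + br y (c x z) ∧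
      -- (r4)
      (2:ℂ) • c (br x y) z = br x (c y z) - br y (c x z) ∧
      -- (r5)
      c (br x y) z = -c x (br y z) + c y (br x z)) :=
  forall₃_congr fun x y z => by
    simpa only [and_assoc] using
      and_congr (t1_to_t6_iff_assoc_and_left_comm c s hs x y z)
        (t7_to_t9_iff_r3_to_r5 c s br hs x y z)

/-- Corollary 3.4 (non-super case): if `x ∗ y = 2 (x ∘ y)`, then conditions
(t1)-(t9) of Theorem 3.2 are equivalent to conditions (r1)-(r5). -/
theorem t_conditions_iff_r_conditions {V : Type*} [AddCommGroup V] [Module ℂ V]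
    (c s br : V →ₗ[ℂ] V →ₗ[ℂ] V)
    (hs : ∀ x y : V, s x y = (2:ℂ) • c x y)
    (hLeib : ∀ x y z : V, br x (br y z) = br (br x y) z + br y (br x z)) :
    (∀ x y z : V,
      -- (t1)
      c (c x y) z + s (c x y) z
        = -c x (c y z) + c x (s y z) - (c y (s x z) - s y (s x z)) ∧
      -- (t2)
      c (c x y) z = -(-s y (c x z) + c y (c x z)) ∧
      -- (t3)
      c (s x y) z = -c x (c y z) + ((2:ℂ) • s y (c x z) - c y (c x z)) ∧
      -- (t4)
      s (c x y) z = -s x (c y z) + s x (s y z) ∧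
      -- (t5)
      s (s x y) z = -((2:ℂ) • s x (c y z)) + s x (s y z) + s y (s x z) ∧
      -- (t6)
      -s x (c y z) + s y (c x z) = 0 ∧
      -- (t7)
      s (br x y) z + br (c x y) z
        = -br x (c y z) + br x (s y z) + s x (br y z) - br y (s x z) ∧
      -- (t8)
      c (br x y) z + br (c x y) z
        = c x (br y z) - (br y (c x z) + c y (br x z) - s y (br x z)) ∧
      -- (t9)
      br (s x y) z = -br x (c y z) + s x (br y z) - (br y (c x z) - s y (br x z)))
    ↔
    (∀ x y z : V,
      -- (r1)
      c (c x y) z = c x (c y z) ∧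
      -- (r2)
      c x (c y z) = c y (c x z) ∧
      -- (r3)
      (2:ℂ) • c x (br y z) = br (c x y) z + br y (c x z) ∧
      -- (r4)
      (2:ℂ) • c (br x y) z = br x (c y z) - br y (c x z) ∧
      -- (r5)
      c (br x y) z = -c x (br y z) + c y (br x z)) :=
  t_conditions_iff_r_conditions_general c s br hs
end

section
/- Let V be a vector space with bilinear operations ∘, ∗, [·,·] where ∗ is trivial (x ∗ y = 0 for all x,y). Then conditions (t1)-(t9) of Theorem 3.2 are equivalent to: (m1) (x∘y)∘z = x∘(y∘z) = 0; (m2) [x∘y,z] = -[x,y∘z] and [x,y∘z] = -[y,x∘z]; (m3) [x,y]∘z + [x∘y,z] = x∘[y,z] - [y,x∘z] - y∘[x,z], for all x,y,z ∈ V. -/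
/-!
With `∗ = 0`, conditions (t4)–(t6) are vacuous, (t7)–(t9) become (m2) and (m3) up to
rearrangement, and (t1)–(t3) say that `(x∘y)∘z = -x∘(y∘z) = -y∘(x∘z)` while
`x∘(y∘z) + y∘(x∘z) = 0`. The first two make `x∘(y∘z)` symmetric in `x, y`, so the third gives
`2 x∘(y∘z) = 0`: this is (m1).
-/

theorem eq_zero_of_add_self_eq_zero {R V : Type*} [Semiring R] [Invertible (2 : R)]
    [AddCommMonoid V] [Module R V] {v : V} (h : v + v = 0) : v = 0 := by
  rw [← one_smul R v, ← invOf_mul_self (2 : R), mul_smul, two_smul, h, smul_zero]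

theorem mul_mul_eq_zero_of_neg_assoc {R V : Type*} [Ring R] [Invertible (2 : R)]
    [AddCommGroup V] [Module R V] {μ : V → V → V} {x y z : V}
    (hx : μ (μ x y) z = -μ x (μ y z)) (hy : μ (μ x y) z = -μ y (μ x z))
    (hsum : μ x (μ y z) + μ y (μ x z) = 0) :
    μ (μ x y) z = 0 ∧ μ x (μ y z) = 0 := by
  have hsymm : μ x (μ y z) = μ y (μ x z) := neg_injective (hx.symm.trans hy)
  have hzero : μ x (μ y z) = 0 := eq_zero_of_add_self_eq_zero (R := R) (hsymm ▸ hsum)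
  exact ⟨by rw [hx, hzero, neg_zero], hzero⟩

theorem t_conditions_iff_m_conditions_general {V : Type*} [AddCommGroup V] [Module ℂ V]
    (c s br : V →ₗ[ℂ] V →ₗ[ℂ] V)
    (hs : ∀ x y : V, s x y = 0) :
    (∀ x y z : V,
      -- (t1)
      c (c x y) z + s (c x y) z
        = -c x (c y z) + c x (s y z) - (c y (s x z) - s y (s x z)) ∧
      -- (t2)
      c (c x y) z = -(-s y (c x z) + c y (c x z)) ∧
      -- (t3)
      c (s x y) z = -c x (c y z) + ((2:ℂ) • s y (c x z) - c y (c x z)) ∧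
      -- (t4)
      s (c x y) z = -s x (c y z) + s x (s y z) ∧
      -- (t5)
      s (s x y) z = -((2:ℂ) • s x (c y z)) + s x (s y z) + s y (s x z) ∧
      -- (t6)
      -s x (c y z) + s y (c x z) = 0 ∧
      -- (t7)
      s (br x y) z + br (c x y) z
        = -br x (c y z) + br x (s y z) + s x (br y z) - br y (s x z) ∧
      -- (t8)
      c (br x y) z + br (c x y) z
        = c x (br y z) - (br y (c x z) + c y (br x z) - s y (br x z)) ∧
      -- (t9)
      br (s x y) z = -br x (c y z) + s x (br y z) - (br y (c x z) - s y (br x z)))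
    ↔
    (∀ x y z : V,
      -- (m1)
      c (c x y) z = 0 ∧ c x (c y z) = 0 ∧
      -- (m2)
      br (c x y) z = -br x (c y z) ∧ br x (c y z) = -br y (c x z) ∧
      -- (m3)
      c (br x y) z + br (c x y) z
        = c x (br y z) - br y (c x z) - c y (br x z)) := by
  simp only [hs, map_zero, LinearMap.zero_apply, smul_zero, add_zero, zero_add, sub_zero,
    zero_sub, neg_zero, true_and]
  constructor
  · intro h x y z
    obtain ⟨t1, t2, t3, t7, t8, t9⟩ := h x y z
    obtain ⟨m1a, m1b⟩ := mul_mul_eq_zero_of_neg_assoc (R := ℂ) (μ := fun a b => c a b) t1 t2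
      (by linear_combination (norm := abel) t3)
    exact ⟨m1a, m1b, t7, by linear_combination (norm := abel) t9,
      by linear_combination (norm := abel) t8⟩
  · intro h x y z
    obtain ⟨m1a, m1b, m2a, m2b, m3⟩ := h x y z
    have m1b_swap : c y (c x z) = 0 := (h y x z).2.1
    exact ⟨by rw [m1a, m1b, neg_zero], by rw [m1a, m1b_swap, neg_zero],
      by rw [m1b, m1b_swap, neg_zero, add_zero], m2a, by linear_combination (norm := abel) m3,
      by linear_combination (norm := abel) m2b⟩

/-- Corollary 3.8 (non-super case): if `∗` is trivial, then conditions (t1)-(t9)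
of Theorem 3.2 are equivalent to conditions (m1)-(m3). -/
theorem t_conditions_iff_m_conditions {V : Type*} [AddCommGroup V] [Module ℂ V]
    (c s br : V →ₗ[ℂ] V →ₗ[ℂ] V)
    (hs : ∀ x y : V, s x y = 0)
    (hLeib : ∀ x y z : V, br x (br y z) = br (br x y) z + br y (br x z)) :
    (∀ x y z : V,
      -- (t1)
      c (c x y) z + s (c x y) z
        = -c x (c y z) + c x (s y z) - (c y (s x z) - s y (s x z)) ∧
      -- (t2)
      c (c x y) z = -(-s y (c x z) + c y (c x z)) ∧
      -- (t3)
      c (s x y) z = -c x (c y z) + ((2:ℂ) • s y (c x z) - c y (c x z)) ∧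
      -- (t4)
      s (c x y) z = -s x (c y z) + s x (s y z) ∧
      -- (t5)
      s (s x y) z = -((2:ℂ) • s x (c y z)) + s x (s y z) + s y (s x z) ∧
      -- (t6)
      -s x (c y z) + s y (c x z) = 0 ∧
      -- (t7)
      s (br x y) z + br (c x y) z
        = -br x (c y z) + br x (s y z) + s x (br y z) - br y (s x z) ∧
      -- (t8)
      c (br x y) z + br (c x y) z
        = c x (br y z) - (br y (c x z) + c y (br x z) - s y (br x z)) ∧
      -- (t9)
      br (s x y) z = -br x (c y z) + s x (br y z) - (br y (c x z) - s y (br x z)))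
    ↔
    (∀ x y z : V,
      -- (m1)
      c (c x y) z = 0 ∧ c x (c y z) = 0 ∧
      -- (m2)
      br (c x y) z = -br x (c y z) ∧ br x (c y z) = -br y (c x z) ∧
      -- (m3)
      c (br x y) z + br (c x y) z
        = c x (br y z) - br y (c x z) - c y (br x z)) :=
  t_conditions_iff_m_conditions_general c s br hs
end

section
/- Let (A,·) be a commutative associative algebra and P: A → A a linear averaging operator, i.e., P(P(x)·y) = P(x)·P(y) for all x,y ∈ A. Define x∘y := P(x)·y. Then (A,∘) is an associative Novikov algebra: (x∘y)∘z = x∘(y∘z) = y∘(x∘z) for all x,y,z ∈ A. -/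
/-- If `P` is an averaging operator on a commutative associative algebra `A`,
then `x ∘ y := P x * y` makes `A` an associative Novikov algebra. -/
theorem averaging_gives_assoc_novikov {A : Type*} [CommRing A] [Algebra ℂ A]
    (P : A →ₗ[ℂ] A) (hP : ∀ x y : A, P (P x * y) = P x * P y)
    (circ : A → A → A) (hcirc : ∀ x y : A, circ x y = P x * y) :
    ∀ x y z : A, circ (circ x y) z = circ x (circ y z) ∧
      circ x (circ y z) = circ y (circ x z) := by
  intro x y z
  simp only [hcirc, hP]
  exact ⟨mul_assoc _ _ _, mul_left_comm _ _ _⟩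
end

section
/- Let A = ℂL ⊕ ℂW with L∘L = L∘W = 0, W∘L = L, W∘W = W. A bilinear bracket [·,·] on A makes (A,∘,[·,·]) an ass-Nov-Leibniz algebra if and only if there exist a,b ∈ ℂ such that [L,L] = [L,W] = 0, [W,L] = aL, [W,W] = bL. -/
/-! The multiplication of `A` is `x ∘ y = ε(x) y` for the coordinate functional `ε` with
`ε(L) = 0`, `ε(W) = 1`. For such a multiplication (r1)–(r3) hold for every bilinear bracket,
(r4) and (r5) together force `ε([x,y]) z = 0` and `[x,z] = ε(x) [W,z]`, and these two facts
already imply the Leibniz identity. On `A` they say exactly that `[L,·] = 0` and that `[W,·]`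
takes values in `ℂL`. -/

section AssNovLeibniz

variable {R V : Type*} [CommRing R] [AddCommGroup V] [Module R V]

def IsAssNovLeibniz (circ br : V →ₗ[R] V →ₗ[R] V) : Prop :=
  ∀ x y z : V,
    circ (circ x y) z = circ x (circ y z) ∧
    circ x (circ y z) = circ y (circ x z) ∧
    br x (br y z) = br (br x y) z + br y (br x z) ∧
    (2:R) • circ x (br y z) = br (circ x y) z + br y (circ x z) ∧
    (2:R) • circ (br x y) z = br x (circ y z) - br y (circ x z) ∧
    circ (br x y) z = -circ x (br y z) + circ y (br x z)

theorem isAssNovLeibniz_iff_of_circ_eq_smul (circ br : V →ₗ[R] V →ₗ[R] V) (ε : V →ₗ[R] R)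
    (hcirc : ∀ x y, circ x y = ε x • y) (w : V) (hw : ε w = 1) :
    IsAssNovLeibniz circ br ↔
      (∀ x y, ε (br x y) = 0) ∧ ∀ x y, br x y = ε x • br w y := by
  constructor
  · intro h
    have hsmul_zero : ∀ x y z : V, ε (br x y) • z = 0 := by
      intro x y z
      obtain ⟨-, -, -, -, h4, h5⟩ := h x y z
      simp only [hcirc, map_smul] at h4 h5
      rw [two_smul] at h4
      calc ε (br x y) • z = (ε (br x y) • z + ε (br x y) • z) - ε (br x y) • z := by abel
        _ = 0 := by rw [h4, h5]; abel
    refine ⟨fun x y => ?_, fun x z => ?_⟩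
    · simpa [hw] using congrArg ε (hsmul_zero x y w)
    · have h5 := (h x w z).2.2.2.2.2
      simp only [hcirc, hsmul_zero, hw, one_smul] at h5
      exact (neg_add_eq_zero.mp h5.symm).symm
  · rintro ⟨hε, hfac⟩ x y z
    refine ⟨?_, ?_, ?_, ?_, ?_, ?_⟩
    · simp only [hcirc, map_smul, LinearMap.smul_apply, smul_smul]
    · simp only [hcirc, smul_comm (ε x)]
    · rw [hfac x (br y z), hfac y z, hfac (br x y), hε, zero_smul, zero_add, hfac y (br x z),
        hfac x z, map_smul, map_smul, smul_comm (ε x)]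
    · simp only [hcirc, map_smul, LinearMap.smul_apply, two_smul]
    · rw [hcirc, hε, zero_smul, smul_zero, hcirc, hcirc, map_smul, map_smul,
        hfac x z, hfac y z, smul_comm (ε y), sub_self]
    · rw [hcirc, hcirc, hcirc, hε, zero_smul, hfac x z, hfac y z, smul_comm (ε y),
        neg_add_cancel]

end AssNovLeibniz

section Prod

variable {R M : Type*} [CommRing R] [AddCommGroup M] [Module R M]

theorem LinearMap.apply_eq_fst_smul_add_snd_smul (f : R × R →ₗ[R] M) (v : R × R) :
    f v = v.1 • f (1, 0) + v.2 • f (0, 1) := by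
  conv_lhs => rw [show v = v.1 • (1, 0) + v.2 • (0, 1) by ext <;> simp]
  rw [map_add, map_smul, map_smul]

theorem circ_eq_snd_smul (circ : R × R →ₗ[R] R × R →ₗ[R] R × R)
    (hLL : circ (1, 0) (1, 0) = 0) (hLW : circ (1, 0) (0, 1) = 0)
    (hWL : circ (0, 1) (1, 0) = (1, 0)) (hWW : circ (0, 1) (0, 1) = (0, 1)) (x y : R × R) :
    circ x y = x.2 • y := by
  rw [circ.apply_eq_fst_smul_add_snd_smul, LinearMap.add_apply, LinearMap.smul_apply,
    LinearMap.smul_apply, (circ (1, 0)).apply_eq_fst_smul_add_snd_smul,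
    (circ (0, 1)).apply_eq_fst_smul_add_snd_smul, hLL, hLW, hWL, hWW]
  ext <;> simp

theorem snd_bracket_eq_zero_and_eq_snd_smul_iff (br : R × R →ₗ[R] R × R →ₗ[R] R × R) :
    ((∀ x y, (br x y).2 = 0) ∧ ∀ x y, br x y = x.2 • br (0, 1) y) ↔
      ∃ a b : R, br (1, 0) (1, 0) = 0 ∧ br (1, 0) (0, 1) = 0 ∧
        br (0, 1) (1, 0) = a • (1, 0) ∧ br (0, 1) (0, 1) = b • (1, 0) := by
  have hline : ∀ v : R × R, v.2 = 0 → v = v.1 • (1, 0) := fun v hv => by ext <;> simp [hv]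
  constructor
  · rintro ⟨hsnd, hfac⟩
    refine ⟨(br (0, 1) (1, 0)).1, (br (0, 1) (0, 1)).1, ?_, ?_, hline _ (hsnd _ _),
      hline _ (hsnd _ _)⟩ <;> simp [hfac (1, 0)]
  · rintro ⟨a, b, hLL, hLW, hWL, hWW⟩
    have hW : ∀ y : R × R, br (0, 1) y = (a * y.1 + b * y.2) • (1, 0) := fun y => by
      rw [(br (0, 1)).apply_eq_fst_smul_add_snd_smul, hWL, hWW, smul_smul, smul_smul, add_smul,
        mul_comm a, mul_comm b]
    have hfac : ∀ x y, br x y = x.2 • br (0, 1) y := fun x y => by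
      rw [br.apply_eq_fst_smul_add_snd_smul, LinearMap.add_apply, LinearMap.smul_apply,
        LinearMap.smul_apply, (br (1, 0)).apply_eq_fst_smul_add_snd_smul, hLL, hLW]
      simp
    exact ⟨fun x y => by simp [hfac x y, hW], hfac⟩

end Prod

/-- Example 3.17: classification of the Leibniz brackets making the
2-dimensional associative Novikov algebra `A = ℂL ⊕ ℂW` (with `L∘L = L∘W = 0`,
`W∘L = L`, `W∘W = W`) into an ass-Nov-Leibniz algebra. -/
theorem two_dim_ass_nov_leibniz_classification
    (circ br : (ℂ × ℂ) →ₗ[ℂ] (ℂ × ℂ) →ₗ[ℂ] (ℂ × ℂ))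
    (L W : ℂ × ℂ) (hL : L = (1, 0)) (hW : W = (0, 1))
    (hLL : circ L L = 0) (hLW : circ L W = 0)
    (hWL : circ W L = L) (hWW : circ W W = W) :
    ((∀ x y z : ℂ × ℂ,
        -- (r1)
        circ (circ x y) z = circ x (circ y z) ∧
        -- (r2)
        circ x (circ y z) = circ y (circ x z) ∧
        -- left Leibniz identity
        br x (br y z) = br (br x y) z + br y (br x z) ∧
        -- (r3)
        (2:ℂ) • circ x (br y z) = br (circ x y) z + br y (circ x z) ∧
        -- (r4)
        (2:ℂ) • circ (br x y) z = br x (circ y z) - br y (circ x z) ∧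
        -- (r5)
        circ (br x y) z = -circ x (br y z) + circ y (br x z))
    ↔ (∃ a b : ℂ, br L L = 0 ∧ br L W = 0 ∧ br W L = a • L ∧ br W W = b • L)) := by
  subst hL hW
  have hcirc := circ_eq_snd_smul circ hLL hLW hWL hWW
  exact (isAssNovLeibniz_iff_of_circ_eq_smul circ br (LinearMap.snd ℂ ℂ ℂ) hcirc (0, 1) rfl).trans
    (snd_bracket_eq_zero_and_eq_snd_smul_iff br)
end

section
/- Let (V,∘,[·,·]) be an ass-Nov-Leibniz algebra. Then the vector space V ⊗ ℂ[t,t⁻¹], with bracket [a⊗tᵐ, b⊗tⁿ] := (m-n)(b∘a)⊗t^{m+n-1} + [b,a]⊗t^{m+n}, is a Leibniz algebra, i.e., satisfies [X,[Y,Z]] = [[X,Y],Z] - [[X,Z],Y]. -/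
/-!
Both sides are trilinear, so it suffices to compare them on `a⊗tᵐ, b⊗tⁿ, c⊗tᵖ`. There each side
lives in the degrees `m+n+p-2`, `m+n+p-1`, `m+n+p`. In the lowest degree only `∘∘`-terms occur
and `(c∘b)∘a = c∘(b∘a) = b∘(c∘a)` reduces the claim to a polynomial identity in `m, n, p`; the
top degree is the left Leibniz identity; the middle degree is the combination
`(p-n)·(r3) + (m-n)·(r4) + (n-m-p)·(r5)` of the compatibility conditions.
-/

open Finsupp

theorem Finsupp.leibniz_of_leibniz_single {R ι M : Type*} [CommSemiring R] [AddCommGroup M]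
    [Module R M] (B : (ι →₀ M) →ₗ[R] (ι →₀ M) →ₗ[R] (ι →₀ M))
    (h : ∀ (i j k : ι) (a b c : M),
      B (single i a) (B (single j b) (single k c))
        = B (B (single i a) (single j b)) (single k c)
          - B (B (single i a) (single k c)) (single j b))
    (X Y Z : ι →₀ M) : B X (B Y Z) = B (B X Y) Z - B (B X Z) Y := by
  induction X using Finsupp.induction_linear with
  | zero => simp
  | add X₁ X₂ h₁ h₂ => simp only [map_add, LinearMap.add_apply, h₁, h₂]; abel
  | single i a =>
    induction Y using Finsupp.induction_linear with
    | zero => simp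
    | add Y₁ Y₂ h₁ h₂ => simp only [map_add, LinearMap.add_apply, h₁, h₂]; abel
    | single j b =>
      induction Z using Finsupp.induction_linear with
      | zero => simp
      | add Z₁ Z₂ h₁ h₂ => simp only [map_add, LinearMap.add_apply, h₁, h₂]; abel
      | single k c => exact h i j k a b c

section AssNovLeibniz

variable {R V : Type*} [CommRing R] [AddCommGroup V] [Module R V] (circ br : V →ₗ[R] V →ₗ[R] V)

theorem novikov_coeff_identity
    (h1 : ∀ x y z : V, circ (circ x y) z = circ x (circ y z))
    (h2 : ∀ x y z : V, circ x (circ y z) = circ y (circ x z)) (m n p : ℤ) (a b c : V) :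
    ((m - (n + p - 1)) * (n - p)) • circ (circ c b) a
      = ((m + n - 1 - p) * (m - n)) • circ c (circ b a)
        - ((m + p - 1 - n) * (m - p)) • circ b (circ c a) := by
  rw [h1, h2 c b a, ← sub_smul]
  congr 1
  ring

theorem mixed_coeff_identity
    (h3 : ∀ x y z : V, (2:R) • circ x (br y z) = br (circ x y) z + br y (circ x z))
    (h4 : ∀ x y z : V, (2:R) • circ (br x y) z = br x (circ y z) - br y (circ x z))
    (h5 : ∀ x y z : V, circ (br x y) z = -circ x (br y z) + circ y (br x z))
    (m n p : ℤ) (a b c : V) :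
    (n - p) • br (circ c b) a + (m - n - p) • circ (br c b) a
      = ((m - n) • br c (circ b a) + (m + n - p) • circ c (br b a))
        - ((m - p) • br b (circ c a) + (m + p - n) • circ b (br c a)) := by
  linear_combination (norm := module)
    ((p - n : ℤ) : R) • h3 c b a + ((m - n : ℤ) : R) • h4 c b a
      + ((n - m - p : ℤ) : R) • h5 c b a

def IsCoeffBracket (B : (ℤ →₀ V) →ₗ[R] (ℤ →₀ V) →ₗ[R] (ℤ →₀ V)) : Prop :=
  ∀ (m n : ℤ) (a b : V),
    B (single m a) (single n b)
      = single (m + n - 1) ((m - n) • circ b a) + single (m + n) (br b a)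

variable {circ br} {B : (ℤ →₀ V) →ₗ[R] (ℤ →₀ V) →ₗ[R] (ℤ →₀ V)}

theorem IsCoeffBracket.single_bracket_single (hB : IsCoeffBracket circ br B)
    (m n p : ℤ) (a b c : V) :
    B (single m a) (B (single n b) (single p c))
      = single (m + n + p - 2) (((m - (n + p - 1)) * (n - p)) • circ (circ c b) a)
        + single (m + n + p - 1) ((n - p) • br (circ c b) a + (m - n - p) • circ (br c b) a)
        + single (m + n + p) (br (br c b) a) := by
  rw [hB n p, map_add, hB, hB, single_add]
  simp only [map_zsmul, LinearMap.smul_apply, smul_smul]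
  rw [show m + (n + p - 1) - 1 = m + n + p - 2 by ring,
    show m + (n + p - 1) = m + n + p - 1 by ring, show m + (n + p) - 1 = m + n + p - 1 by ring,
    show m + (n + p) = m + n + p by ring,
    show m - (n + p) = m - n - p by ring]
  abel

theorem IsCoeffBracket.bracket_single_single (hB : IsCoeffBracket circ br B)
    (m n p : ℤ) (a b c : V) :
    B (B (single m a) (single n b)) (single p c)
      = single (m + n + p - 2) (((m + n - 1 - p) * (m - n)) • circ c (circ b a))
        + single (m + n + p - 1) ((m - n) • br c (circ b a) + (m + n - p) • circ c (br b a))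
        + single (m + n + p) (br c (br b a)) := by
  rw [hB m n, map_add, LinearMap.add_apply, hB, hB, single_add]
  simp only [map_zsmul, smul_smul]
  rw [show m + n - 1 + p - 1 = m + n + p - 2 by ring,
    show m + n - 1 + p = m + n + p - 1 by ring]
  abel

theorem IsCoeffBracket.leibniz_single (hB : IsCoeffBracket circ br B)
    (h1 : ∀ x y z : V, circ (circ x y) z = circ x (circ y z))
    (h2 : ∀ x y z : V, circ x (circ y z) = circ y (circ x z))
    (hLeib : ∀ x y z : V, br x (br y z) = br (br x y) z + br y (br x z))
    (h3 : ∀ x y z : V, (2:R) • circ x (br y z) = br (circ x y) z + br y (circ x z))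
    (h4 : ∀ x y z : V, (2:R) • circ (br x y) z = br x (circ y z) - br y (circ x z))
    (h5 : ∀ x y z : V, circ (br x y) z = -circ x (br y z) + circ y (br x z))
    (m n p : ℤ) (a b c : V) :
    B (single m a) (B (single n b) (single p c))
      = B (B (single m a) (single n b)) (single p c)
        - B (B (single m a) (single p c)) (single n b) := by
  rw [hB.single_bracket_single, hB.bracket_single_single, hB.bracket_single_single,
    add_right_comm m p n, novikov_coeff_identity circ h1 h2,
    mixed_coeff_identity circ br h3 h4 h5, eq_sub_of_add_eq (hLeib c b a).symm]
  simp only [single_sub]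
  abel

end AssNovLeibniz

/-- The coefficient algebra of the quadratic Leibniz conformal algebra attached
to an ass-Nov-Leibniz algebra `(V, ∘, [·,·])`: the free module `V ⊗ ℂ[t,t⁻¹]`
(modelled as `ℤ →₀ V`) with bracket
`[a⊗tᵐ, b⊗tⁿ] = (m-n)(b∘a)⊗t^{m+n-1} + [b,a]⊗t^{m+n}` is a (right) Leibniz
algebra. -/
theorem coeff_of_ass_nov_leibniz_is_leibniz {V : Type*} [AddCommGroup V] [Module ℂ V]
    (circ br : V →ₗ[ℂ] V →ₗ[ℂ] V)
    -- associative Novikov axioms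
    (h1 : ∀ x y z : V, circ (circ x y) z = circ x (circ y z))
    (h2 : ∀ x y z : V, circ x (circ y z) = circ y (circ x z))
    -- left Leibniz identity
    (hLeib : ∀ x y z : V, br x (br y z) = br (br x y) z + br y (br x z))
    -- compatibility conditions (r3)-(r5)
    (h3 : ∀ x y z : V, (2:ℂ) • circ x (br y z) = br (circ x y) z + br y (circ x z))
    (h4 : ∀ x y z : V, (2:ℂ) • circ (br x y) z = br x (circ y z) - br y (circ x z))
    (h5 : ∀ x y z : V, circ (br x y) z = -circ x (br y z) + circ y (br x z))
    -- the bilinear bracket on V ⊗ ℂ[t,t⁻¹]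
    (B : (ℤ →₀ V) →ₗ[ℂ] (ℤ →₀ V) →ₗ[ℂ] (ℤ →₀ V))
    (hB : ∀ (m n : ℤ) (a b : V),
      B (single m a) (single n b)
        = single (m + n - 1) ((m - n) • circ b a) + single (m + n) (br b a)) :
    ∀ X Y Z : ℤ →₀ V, B X (B Y Z) = B (B X Y) Z - B (B X Z) Y := by
  intro X Y Z
  exact Finsupp.leibniz_of_leibniz_single B
    (IsCoeffBracket.leibniz_single hB h1 h2 hLeib h3 h4 h5) X Y Z
end

section
/- Let (V,∘) be an associative Novikov algebra. Then the vector space V ⊗ ℂ[t,t⁻¹] with bracket [a⊗tᵐ, b⊗tⁿ] := (m-n)(b∘a)⊗t^{m+n-1} is a (right) Leibniz algebra. Moreover, if ∘ is not commutative, this Leibniz algebra is not a Lie algebra (the bracket is not antisymmetric). -/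
open Finsupp

/-! On monomials both sides of the right Leibniz identity are multiples of
`single (m + n + p - 2) (c ∘ b ∘ a)`: associativity and the left-commutativity
`b ∘ (c ∘ a) = c ∘ (b ∘ a)` identify the three products, and what remains is a polynomial
identity between the integer coefficients. Bilinearity extends the identity from monomials.
Antisymmetry fails on `a ⊗ t⁰` and `b ⊗ t¹`, whose bracket in either order lands in degree `0`
and differs from the negated reverse bracket by `a ∘ b - b ∘ a`. -/

section RightLeibniz

variable {R ι M : Type*} [CommSemiring R] [AddCommGroup M] [Module R M]

theorem rightLeibniz_of_single (B : (ι →₀ M) →ₗ[R] (ι →₀ M) →ₗ[R] (ι →₀ M))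
    (h : ∀ (m n p : ι) (a b c : M),
      B (single m a) (B (single n b) (single p c)) =
        B (B (single m a) (single n b)) (single p c) -
          B (B (single m a) (single p c)) (single n b))
    (X Y Z : ι →₀ M) : B X (B Y Z) = B (B X Y) Z - B (B X Z) Y := by
  induction X using Finsupp.induction_linear with
  | zero => simp
  | add X X' hX hX' => simp only [map_add, LinearMap.add_apply, hX, hX']; abel
  | single m a =>
    induction Y using Finsupp.induction_linear with
    | zero => simp
    | add Y Y' hY hY' => simp only [map_add, LinearMap.add_apply, hY, hY']; abel
    | single n b =>
      induction Z using Finsupp.induction_linear with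
      | zero => simp
      | add Z Z' hZ hZ' => simp only [map_add, LinearMap.add_apply, hZ, hZ']; abel
      | single p c => exact h m n p a b c

end RightLeibniz

section NovikovCurrent

variable {R V : Type*} [CommSemiring R] [AddCommGroup V] [Module R V]
  (circ : V →ₗ[R] V →ₗ[R] V) (B : (ℤ →₀ V) →ₗ[R] (ℤ →₀ V) →ₗ[R] (ℤ →₀ V))

theorem novikov_current_coeff_identity (m n p : ℤ) :
    (m - (n + p - 1)) * (n - p) =
      (m + n - 1 - p) * (m - n) - (m + p - 1 - n) * (m - p) := by
  ring

theorem novikov_current_rightLeibniz_single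
    (h1 : ∀ x y z : V, circ (circ x y) z = circ x (circ y z))
    (h2 : ∀ x y z : V, circ x (circ y z) = circ y (circ x z))
    (hB : ∀ (m n : ℤ) (a b : V),
      B (single m a) (single n b) = single (m + n - 1) ((m - n) • circ b a))
    (m n p : ℤ) (a b c : V) :
    B (single m a) (B (single n b) (single p c)) =
      B (B (single m a) (single n b)) (single p c) -
        B (B (single m a) (single p c)) (single n b) := by
  rw [hB n p, hB m n, hB m p, hB m (n + p - 1), hB (m + n - 1) p, hB (m + p - 1) n,
    show m + (n + p - 1) - 1 = m + n + p - 2 by ring,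
    show m + n - 1 + p - 1 = m + n + p - 2 by ring,
    show m + p - 1 + n - 1 = m + n + p - 2 by ring, ← single_sub]
  congr 1
  simp only [map_zsmul, LinearMap.smul_apply, h1, h2 b c a, smul_smul, ← sub_smul,
    novikov_current_coeff_identity]

theorem novikov_current_single_add_swap
    (hB : ∀ (m n : ℤ) (a b : V),
      B (single m a) (single n b) = single (m + n - 1) ((m - n) • circ b a))
    (a b : V) :
    B (single 1 b) (single 0 a) + B (single 0 a) (single 1 b) = single 0 (circ a b - circ b a) := by
  rw [hB, hB, show (1 : ℤ) + 0 - 1 = 0 by rfl, show (0 : ℤ) + 1 - 1 = 0 by rfl, ← single_add]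
  norm_num [sub_eq_add_neg]

end NovikovCurrent

/-- For an associative Novikov algebra `(V, ∘)`, the space `V ⊗ ℂ[t,t⁻¹]`
(modelled as `ℤ →₀ V`) with bracket `[a⊗tᵐ, b⊗tⁿ] = (m-n)(b∘a)⊗t^{m+n-1}` is a
(right) Leibniz algebra, and if `∘` is not commutative, the bracket is not
antisymmetric, so it is not a Lie algebra. -/
theorem coeff_of_assoc_novikov_is_leibniz_not_lie {V : Type*} [AddCommGroup V] [Module ℂ V]
    (circ : V →ₗ[ℂ] V →ₗ[ℂ] V)
    (h1 : ∀ x y z : V, circ (circ x y) z = circ x (circ y z))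
    (h2 : ∀ x y z : V, circ x (circ y z) = circ y (circ x z))
    (B : (ℤ →₀ V) →ₗ[ℂ] (ℤ →₀ V) →ₗ[ℂ] (ℤ →₀ V))
    (hB : ∀ (m n : ℤ) (a b : V),
      B (single m a) (single n b) = single (m + n - 1) ((m - n) • circ b a)) :
    (∀ X Y Z : ℤ →₀ V, B X (B Y Z) = B (B X Y) Z - B (B X Z) Y) ∧
    (¬(∀ x y : V, circ x y = circ y x) →
      ∃ X Y : ℤ →₀ V, B X Y ≠ -B Y X) := by
  refine ⟨rightLeibniz_of_single B (novikov_current_rightLeibniz_single circ B h1 h2 hB), ?_⟩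
  intro hcomm
  push Not at hcomm
  obtain ⟨a, b, hab⟩ := hcomm
  refine ⟨single 1 b, single 0 a, fun hanti => hab ?_⟩
  have hsum := novikov_current_single_add_swap circ B hB a b
  rwa [eq_neg_iff_add_eq_zero.mp hanti, eq_comm, single_eq_zero, sub_eq_zero] at hsum
end

section
/- The Leibniz superalgebra structure on Coeff(R_{a,b}): the vector space spanned by {L_n, W_n : n ∈ ℤ} with products [L_m,L_n] = [W_n,L_m] = 0, [L_m,W_n] = (m-n)L_{m+n-1} + aL_{m+n}, [W_m,W_n] = (m-n)W_{m+n-1} + bL_{m+n} is a (right) Leibniz algebra for all a,b ∈ ℂ, and it is not a Lie algebra (the bracket is not antisymmetric). -/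
/-!
The `L_n` span a subspace `A` with `[x, A] = 0` for every `x` and `[A, x] ⊆ A`. By trilinearity it
suffices to check the Leibniz identity `[x,[y,z]] = [[x,y],z] - [[x,z],y]` on generators. If `z` or
`y` is some `L_n`, every term of the identity is a bracket with an element of `A` on the right, so
both sides vanish. The two remaining cases `x = L_m, W_m` with `y = W_n`, `z = W_p` are polynomial
identities in `m, n, p`. Antisymmetry fails since `[L_1, W_0] = L_0 + a L_1` while `[W_0, L_1] = 0`.
-/

open Finsupp

theorem LinearMap.rightLeibniz_of_span_eq_top {R M : Type*} [CommRing R] [AddCommGroup M]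
    [Module R M] (B : M →ₗ[R] M →ₗ[R] M) {s : Set M} (hs : Submodule.span R s = ⊤)
    (h : ∀ x ∈ s, ∀ y ∈ s, ∀ z ∈ s, B x (B y z) = B (B x y) z - B (B x z) y) (x y z : M) :
    B x (B y z) = B (B x y) z - B (B x z) y := by
  have hz_all : ∀ x ∈ s, ∀ y ∈ s, ∀ z, B x (B y z) = B (B x y) z - B (B x z) y :=
    fun x hx y hy => LinearMap.congr_fun <| LinearMap.ext_on hs
      (f := B x ∘ₗ B y) (g := B (B x y) - B.flip y ∘ₗ B x)
      fun z hz => by simpa using h x hx y hy z hz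
  have hyz_all : ∀ x ∈ s, ∀ y z, B x (B y z) = B (B x y) z - B (B x z) y :=
    fun x hx y z => LinearMap.congr_fun (LinearMap.ext_on hs
      (f := B x ∘ₗ B.flip z) (g := B.flip z ∘ₗ B x - B (B x z))
      fun y hy => by simpa using hz_all x hx y hy z) y
  exact LinearMap.congr_fun (LinearMap.ext_on hs
    (f := B.flip (B y z)) (g := B.flip z ∘ₗ B.flip y - B.flip y ∘ₗ B.flip z)
    fun x hx => by simpa using hyz_all x hx y z) x

theorem span_range_single_union_eq_top {R : Type*} [Semiring R] (L W : ℤ → (Fin 2 × ℤ) →₀ R)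
    (hLdef : ∀ n, L n = single (0, n) 1) (hWdef : ∀ n, W n = single (1, n) 1) :
    Submodule.span R (Set.range L ∪ Set.range W) = ⊤ := by
  refine eq_top_mono (Submodule.span_mono ?_) (Finsupp.basisSingleOne (R := R)).span_eq
  rintro _ ⟨⟨i, n⟩, rfl⟩
  fin_cases i
  · exact Or.inl ⟨n, by simp [hLdef]⟩
  · exact Or.inr ⟨n, by simp [hWdef]⟩

theorem coeffRab_rightLeibniz_on_generators {R M : Type*} [CommRing R] [AddCommGroup M]
    [Module R M] (a b : R) (B : M →ₗ[R] M →ₗ[R] M) (L W : ℤ → M)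
    (hXL : ∀ x n, B x (L n) = 0)
    (hLW : ∀ m n : ℤ, B (L m) (W n) = ((m : R) - n) • L (m + n - 1) + a • L (m + n))
    (hWW : ∀ m n : ℤ, B (W m) (W n) = ((m : R) - n) • W (m + n - 1) + b • L (m + n)) :
    ∀ x ∈ Set.range L ∪ Set.range W, ∀ y ∈ Set.range L ∪ Set.range W,
      ∀ z ∈ Set.range L ∪ Set.range W, B x (B y z) = B (B x y) z - B (B x z) y := by
  rintro _ (⟨m, rfl⟩ | ⟨m, rfl⟩) _ (⟨n, rfl⟩ | ⟨n, rfl⟩) _ (⟨p, rfl⟩ | ⟨p, rfl⟩)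
  all_goals simp only [hXL, hLW, hWW, map_add, map_smul, LinearMap.add_apply,
    LinearMap.smul_apply, smul_zero, add_zero, map_zero, LinearMap.zero_apply, sub_zero]
  all_goals push_cast; ring_nf; module

/-- The coefficient algebra `Coeff(R_{a,b})`: the free `ℂ`-module on symbols
`L_n, W_n` (`n ∈ ℤ`) with `[L_m,L_n] = [W_n,L_m] = 0`,
`[L_m,W_n] = (m-n)L_{m+n-1} + aL_{m+n}`,
`[W_m,W_n] = (m-n)W_{m+n-1} + bL_{m+n}` is a (right) Leibniz algebra, and its
bracket is not antisymmetric (so it is not a Lie algebra). -/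
theorem coeff_Rab_is_leibniz_not_lie (a b : ℂ)
    (B : ((Fin 2 × ℤ) →₀ ℂ) →ₗ[ℂ] ((Fin 2 × ℤ) →₀ ℂ) →ₗ[ℂ] ((Fin 2 × ℤ) →₀ ℂ))
    (L W : ℤ → (Fin 2 × ℤ) →₀ ℂ)
    (hLdef : ∀ n : ℤ, L n = single (0, n) 1)
    (hWdef : ∀ n : ℤ, W n = single (1, n) 1)
    (hLL : ∀ m n : ℤ, B (L m) (L n) = 0)
    (hWL : ∀ m n : ℤ, B (W n) (L m) = 0)
    (hLW : ∀ m n : ℤ, B (L m) (W n)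
      = ((m : ℂ) - (n : ℂ)) • L (m + n - 1) + a • L (m + n))
    (hWW : ∀ m n : ℤ, B (W m) (W n)
      = ((m : ℂ) - (n : ℂ)) • W (m + n - 1) + b • L (m + n)) :
    (∀ X Y Z : (Fin 2 × ℤ) →₀ ℂ, B X (B Y Z) = B (B X Y) Z - B (B X Z) Y) ∧
    (∃ X Y : (Fin 2 × ℤ) →₀ ℂ, B X Y ≠ -B Y X) := by
  have hspan := span_range_single_union_eq_top L W hLdef hWdef
  have hXL : ∀ x n, B x (L n) = 0 := fun x n =>
    LinearMap.congr_fun (LinearMap.ext_on hspan (f := B.flip (L n)) (g := 0) <| by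
      rintro _ (⟨m, rfl⟩ | ⟨m, rfl⟩) <;> simp [hLL, hWL]) x
  refine ⟨B.rightLeibniz_of_span_eq_top hspan
    (coeffRab_rightLeibniz_on_generators a b B L W hXL hLW hWW), L 1, W 0, ?_⟩
  rw [hLW, hWL, neg_zero]
  intro h
  simpa [hLdef, single_apply] using DFunLike.congr_fun h (0, 0)
end

section
/- Let (V,∘) be an associative Novikov algebra and α₃ a bilinear form on V satisfying α₃(a, c∘b) = α₃(b∘a, c) = α₃(c∘a, b) for all a,b,c ∈ V. Then φ₃ defined on (V ⊗ ℂ[t,t⁻¹])² by φ₃(a⊗tᵐ, b⊗tⁿ) := m(m-1)(m-2)α₃(a,b)δ_{m+n-2,0} is a 2-cocycle of the Leibniz algebra V ⊗ ℂ[t,t⁻¹] with bracket [a⊗tᵐ, b⊗tⁿ] = (m-n)(b∘a)⊗t^{m+n-1}; i.e., φ₃(X,[Y,Z]) = φ₃([X,Y],Z) - φ₃([X,Z],Y) for all X,Y,Z. -/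
open Finsupp

/-! The cocycle identity is trilinear, so it suffices to check it on homogeneous elements
`a⊗tᵐ, b⊗tⁿ, c⊗tᵖ`. All three terms vanish unless `m + n + p = 3`, and the hypothesis on `α₃`
makes the three values of `α₃` that occur equal; what remains is a polynomial identity in
`m, n, p` on the plane `m + n + p = 3`. -/

def IsLeibnizTwoCocycle {R M : Type*} [CommRing R] [AddCommGroup M] [Module R M]
    (B : M →ₗ[R] M →ₗ[R] M) (φ : M →ₗ[R] M →ₗ[R] R) : Prop :=
  ∀ X Y Z : M, φ X (B Y Z) = φ (B X Y) Z - φ (B X Z) Y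

theorem isLeibnizTwoCocycle_of_single {R ι M : Type*} [CommRing R] [AddCommGroup M] [Module R M]
    (B : (ι →₀ M) →ₗ[R] (ι →₀ M) →ₗ[R] (ι →₀ M)) (φ : (ι →₀ M) →ₗ[R] (ι →₀ M) →ₗ[R] R)
    (h : ∀ (m n p : ι) (a b c : M),
      φ (single m a) (B (single n b) (single p c))
        = φ (B (single m a) (single n b)) (single p c)
          - φ (B (single m a) (single p c)) (single n b)) :
    IsLeibnizTwoCocycle B φ := by
  intro X Y Z
  induction X using Finsupp.induction_linear with
  | zero => simp
  | add X₁ X₂ h₁ h₂ => simp only [map_add, LinearMap.add_apply, h₁, h₂]; ring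
  | single m a =>
  induction Y using Finsupp.induction_linear with
  | zero => simp
  | add Y₁ Y₂ h₁ h₂ => simp only [map_add, LinearMap.add_apply, h₁, h₂]; ring
  | single n b =>
  induction Z using Finsupp.induction_linear with
  | zero => simp
  | add Z₁ Z₂ h₁ h₂ => simp only [map_add, LinearMap.add_apply, h₁, h₂]; ring
  | single p c => exact h m n p a b c

theorem falling_cube_cocycle_identity {R : Type*} [CommRing R] {m n p : R}
    (h : m + n + p = 3) :
    m * (m - 1) * (m - 2) * (n - p)
      = (m - n) * ((m + n - 1) * (m + n - 2) * (m + n - 3))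
        - (m - p) * ((m + p - 1) * (m + p - 2) * (m + p - 3)) := by
  obtain rfl : p = 3 - m - n := by linear_combination h
  ring

theorem phi3_is_two_cocycle_general {V : Type*} [AddCommGroup V] [Module ℂ V]
    (circ : V →ₗ[ℂ] V →ₗ[ℂ] V)
    (a3 : V →ₗ[ℂ] V →ₗ[ℂ] ℂ)
    (h3 : ∀ a b c : V,
      a3 a (circ c b) = a3 (circ b a) c ∧ a3 (circ b a) c = a3 (circ c a) b)
    (B : (ℤ →₀ V) →ₗ[ℂ] (ℤ →₀ V) →ₗ[ℂ] (ℤ →₀ V))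
    (hB : ∀ (m n : ℤ) (a b : V),
      B (single m a) (single n b) = single (m + n - 1) ((m - n) • circ b a))
    (φ : (ℤ →₀ V) →ₗ[ℂ] (ℤ →₀ V) →ₗ[ℂ] ℂ)
    (hφ : ∀ (m n : ℤ) (a b : V),
      φ (single m a) (single n b)
        = if m + n - 2 = 0 then (m : ℂ) * ((m : ℂ) - 1) * ((m : ℂ) - 2) * a3 a b
          else 0) :
    ∀ X Y Z : ℤ →₀ V, φ X (B Y Z) = φ (B X Y) Z - φ (B X Z) Y := by
  refine isLeibnizTwoCocycle_of_single B φ fun m n p a b c => ?_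
  simp only [hB, hφ, map_zsmul, LinearMap.smul_apply, zsmul_eq_mul]
  by_cases h : m + n + p = 3
  · rw [if_pos (by omega), if_pos (by omega), if_pos (by omega)]
    obtain ⟨hbc, hca⟩ := h3 a b c
    rw [hbc, hca]
    have hC : (m : ℂ) + n + p = 3 := by exact_mod_cast h
    push_cast
    linear_combination a3 (circ c a) b * falling_cube_cocycle_identity hC
  · rw [if_neg (by omega), if_neg (by omega), if_neg (by omega)]
    simp

/-- Corollary 4.7 (the `φ₃` part, non-super, trivial bracket): if `α₃` satisfies
`α₃(a, c∘b) = α₃(b∘a, c) = α₃(c∘a, b)`, then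
`φ₃(a⊗tᵐ, b⊗tⁿ) = m(m-1)(m-2)α₃(a,b)δ_{m+n-2,0}` is a 2-cocycle of the Leibniz
algebra `V ⊗ ℂ[t,t⁻¹]` with bracket `[a⊗tᵐ, b⊗tⁿ] = (m-n)(b∘a)⊗t^{m+n-1}`. -/
theorem phi3_is_two_cocycle {V : Type*} [AddCommGroup V] [Module ℂ V]
    (circ : V →ₗ[ℂ] V →ₗ[ℂ] V)
    (h1 : ∀ x y z : V, circ (circ x y) z = circ x (circ y z))
    (h2 : ∀ x y z : V, circ x (circ y z) = circ y (circ x z))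
    (a3 : V →ₗ[ℂ] V →ₗ[ℂ] ℂ)
    (h3 : ∀ a b c : V,
      a3 a (circ c b) = a3 (circ b a) c ∧ a3 (circ b a) c = a3 (circ c a) b)
    (B : (ℤ →₀ V) →ₗ[ℂ] (ℤ →₀ V) →ₗ[ℂ] (ℤ →₀ V))
    (hB : ∀ (m n : ℤ) (a b : V),
      B (single m a) (single n b) = single (m + n - 1) ((m - n) • circ b a))
    (φ : (ℤ →₀ V) →ₗ[ℂ] (ℤ →₀ V) →ₗ[ℂ] ℂ)
    (hφ : ∀ (m n : ℤ) (a b : V),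
      φ (single m a) (single n b)
        = if m + n - 2 = 0 then (m : ℂ) * ((m : ℂ) - 1) * ((m : ℂ) - 2) * a3 a b
          else 0) :
    ∀ X Y Z : ℤ →₀ V, φ X (B Y Z) = φ (B X Y) Z - φ (B X Z) Y :=
  phi3_is_two_cocycle_general circ a3 h3 B hB φ hφ
end

section
/- Let (V,∘) be an associative Novikov algebra and α₁ a bilinear form on V satisfying α₁(a, c∘b) = α₁(b∘a, c) = α₁(c∘a, b) for all a,b,c ∈ V. Then φ₁ defined by φ₁(a⊗tᵐ, b⊗tⁿ) := m·α₁(a,b)δ_{m+n,0} is a 2-cocycle of the Leibniz algebra V ⊗ ℂ[t,t⁻¹] with bracket [a⊗tᵐ, b⊗tⁿ] = (m-n)(b∘a)⊗t^{m+n-1}. -/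
open Finsupp

/-!
Both sides of the cocycle identity are trilinear, so it suffices to check it on homogeneous
elements `a⊗tᵐ, b⊗tⁿ, c⊗tᵖ`. There all three terms vanish unless `m + n + p = 1`, and the
invariance of `α₁` makes the three values of `α₁` that occur equal; the identity then reduces to
`m(n - p) = (m + n - 1)(m - n) - (m + p - 1)(m - p)`, which holds because `m + n + p = 1`.
-/

def IsTwoCocycle {R M W : Type*} [CommRing R] [AddCommGroup M] [Module R M] [AddCommGroup W]
    [Module R W] (φ : M →ₗ[R] M →ₗ[R] W) (B : M →ₗ[R] M →ₗ[R] M) : Prop :=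
  ∀ X Y Z : M, φ X (B Y Z) = φ (B X Y) Z - φ (B X Z) Y

theorem isTwoCocycle_of_single {R ι V W : Type*} [CommRing R] [AddCommGroup V] [Module R V]
    [AddCommGroup W] [Module R W] {φ : (ι →₀ V) →ₗ[R] (ι →₀ V) →ₗ[R] W}
    {B : (ι →₀ V) →ₗ[R] (ι →₀ V) →ₗ[R] (ι →₀ V)}
    (h : ∀ (m n p : ι) (a b c : V),
      φ (single m a) (B (single n b) (single p c))
        = φ (B (single m a) (single n b)) (single p c)
          - φ (B (single m a) (single p c)) (single n b)) :
    IsTwoCocycle φ B := by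
  intro X Y Z
  induction X using Finsupp.induction_linear with
  | zero => simp
  | add X X' hX hX' => simp only [map_add, LinearMap.add_apply, hX, hX']; abel
  | single m a =>
    induction Y using Finsupp.induction_linear with
    | zero => simp
    | add Y Y' hY hY' => simp only [map_add, LinearMap.add_apply, hY, hY']; abel
    | single n b =>
      induction Z using Finsupp.induction_linear with
      | zero => simp
      | add Z Z' hZ hZ' => simp only [map_add, LinearMap.add_apply, hZ, hZ']; abel
      | single p c => exact h m n p a b c

section LoopAlgebra

variable {V : Type*} [AddCommGroup V] [Module ℂ V] {circ : V →ₗ[ℂ] V →ₗ[ℂ] V}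
  {a1 : V →ₗ[ℂ] V →ₗ[ℂ] ℂ} {B : (ℤ →₀ V) →ₗ[ℂ] (ℤ →₀ V) →ₗ[ℂ] (ℤ →₀ V)}
  {φ : (ℤ →₀ V) →ₗ[ℂ] (ℤ →₀ V) →ₗ[ℂ] ℂ}

theorem loop_form_single_bracket
    (hB : ∀ (m n : ℤ) (a b : V),
      B (single m a) (single n b) = single (m + n - 1) ((m - n) • circ b a))
    (hφ : ∀ (m n : ℤ) (a b : V),
      φ (single m a) (single n b) = if m + n = 0 then (m : ℂ) * a1 a b else 0)
    (m n p : ℤ) (a b c : V) :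
    φ (single m a) (B (single n b) (single p c))
      = if m + n + p = 1 then (m * (n - p) : ℂ) * a1 a (circ c b) else 0 := by
  rw [hB, hφ]
  refine if_congr (by omega) ?_ rfl
  rw [map_zsmul, zsmul_eq_mul]
  push_cast
  ring

theorem loop_form_bracket_single
    (hB : ∀ (m n : ℤ) (a b : V),
      B (single m a) (single n b) = single (m + n - 1) ((m - n) • circ b a))
    (hφ : ∀ (m n : ℤ) (a b : V),
      φ (single m a) (single n b) = if m + n = 0 then (m : ℂ) * a1 a b else 0)
    (m n p : ℤ) (a b c : V) :
    φ (B (single m a) (single n b)) (single p c)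
      = if m + n + p = 1 then ((m + n - 1) * (m - n) : ℂ) * a1 (circ b a) c else 0 := by
  rw [hB, hφ]
  refine if_congr (by omega) ?_ rfl
  rw [LinearMap.map_smul_of_tower, LinearMap.smul_apply, zsmul_eq_mul]
  push_cast
  ring

end LoopAlgebra

theorem phi1_is_two_cocycle_general {V : Type*} [AddCommGroup V] [Module ℂ V]
    (circ : V →ₗ[ℂ] V →ₗ[ℂ] V)
    (a1 : V →ₗ[ℂ] V →ₗ[ℂ] ℂ)
    (h3 : ∀ a b c : V,
      a1 a (circ c b) = a1 (circ b a) c ∧ a1 (circ b a) c = a1 (circ c a) b)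
    (B : (ℤ →₀ V) →ₗ[ℂ] (ℤ →₀ V) →ₗ[ℂ] (ℤ →₀ V))
    (hB : ∀ (m n : ℤ) (a b : V),
      B (single m a) (single n b) = single (m + n - 1) ((m - n) • circ b a))
    (φ : (ℤ →₀ V) →ₗ[ℂ] (ℤ →₀ V) →ₗ[ℂ] ℂ)
    (hφ : ∀ (m n : ℤ) (a b : V),
      φ (single m a) (single n b)
        = if m + n = 0 then (m : ℂ) * a1 a b
          else 0) :
    ∀ X Y Z : ℤ →₀ V, φ X (B Y Z) = φ (B X Y) Z - φ (B X Z) Y := by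
  refine isTwoCocycle_of_single fun m n p a b c => ?_
  rw [loop_form_single_bracket hB hφ, loop_form_bracket_single hB hφ,
    loop_form_bracket_single hB hφ, add_right_comm m p n]
  split_ifs with hdeg
  · obtain ⟨e1, e2⟩ := h3 a b c
    have hdeg' : (m + n + p : ℂ) = 1 := by exact_mod_cast hdeg
    rw [e1, e2]
    linear_combination ((n : ℂ) - p) * a1 (circ c a) b * hdeg'
  · simp

/-- Corollary 4.7 (the `φ₁` part, non-super, trivial bracket): if `α₁` satisfies
`α₁(a, c∘b) = α₁(b∘a, c) = α₁(c∘a, b)`, then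
`φ₁(a⊗tᵐ, b⊗tⁿ) = m·α₁(a,b)δ_{m+n,0}` is a 2-cocycle of the Leibniz
algebra `V ⊗ ℂ[t,t⁻¹]` with bracket `[a⊗tᵐ, b⊗tⁿ] = (m-n)(b∘a)⊗t^{m+n-1}`. -/
theorem phi1_is_two_cocycle {V : Type*} [AddCommGroup V] [Module ℂ V]
    (circ : V →ₗ[ℂ] V →ₗ[ℂ] V)
    (h1 : ∀ x y z : V, circ (circ x y) z = circ x (circ y z))
    (h2 : ∀ x y z : V, circ x (circ y z) = circ y (circ x z))
    (a1 : V →ₗ[ℂ] V →ₗ[ℂ] ℂ)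
    (h3 : ∀ a b c : V,
      a1 a (circ c b) = a1 (circ b a) c ∧ a1 (circ b a) c = a1 (circ c a) b)
    (B : (ℤ →₀ V) →ₗ[ℂ] (ℤ →₀ V) →ₗ[ℂ] (ℤ →₀ V))
    (hB : ∀ (m n : ℤ) (a b : V),
      B (single m a) (single n b) = single (m + n - 1) ((m - n) • circ b a))
    (φ : (ℤ →₀ V) →ₗ[ℂ] (ℤ →₀ V) →ₗ[ℂ] ℂ)
    (hφ : ∀ (m n : ℤ) (a b : V),
      φ (single m a) (single n b)
        = if m + n = 0 then (m : ℂ) * a1 a b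
          else 0) :
    ∀ X Y Z : ℤ →₀ V, φ X (B Y Z) = φ (B X Y) Z - φ (B X Z) Y :=
  phi1_is_two_cocycle_general circ a1 h3 B hB φ hφ
end

section
/- The space spanned by {L_n, W_n : n ∈ ℤ} ∪ {c} with bracket [L_m,L_n] = [W_n,L_m] = 0, [L_m,W_n] = (m-n)L_{m+n-1} + (mγδ_{m+n,0} + m(m-1)(m-2)βδ_{m+n-2,0})c, [W_m,W_n] = (m-n)W_{m+n-1} + (mγδ_{m+n,0} + m(m-1)(m-2)βδ_{m+n-2,0})c, and c central, is a (right) Leibniz algebra for all β, γ ∈ ℂ. -/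
/-!
The Leibniz identity is trilinear, so it suffices to check it on the basis `L_n, W_n, c`. Since
`c` is central and every `L_n` is killed by the bracket from the right, as is every `[L_m, W_n]`,
only the triples `(V_a, W_b, W_d)` with `V ∈ {L, W}` are not immediate. For these the `V`-components
agree by a polynomial identity in `a, b, d`, and the `c`-components agree by the cocycle identity
`(b - d) ω(a, b + d - 1) = (a - b) ω(a + b - 1, d) - (a - d) ω(a + d - 1, b)`: all three terms
live on the same level `a + b + d - 1 ∈ {0, 2}`, where it is a polynomial identity once `d` is
eliminated.
-/

open Finsupp

section Leibniz

variable {R M : Type*} [CommRing R] [AddCommGroup M] [Module R M]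

def leibnizator (B : M →ₗ[R] M →ₗ[R] M) : M →ₗ[R] M →ₗ[R] M →ₗ[R] M :=
  (LinearMap.llcomp R M M M).compl₁₂ B B - LinearMap.llcomp R M M (M →ₗ[R] M) B ∘ₗ B
    + (LinearMap.lflip : (M →ₗ[R] M →ₗ[R] M) ≃ₗ[R] _).toLinearMap
      ∘ₗ LinearMap.llcomp R M M (M →ₗ[R] M) B ∘ₗ B

theorem leibnizator_apply (B : M →ₗ[R] M →ₗ[R] M) (X Y Z : M) :
    leibnizator B X Y Z = B X (B Y Z) - B (B X Y) Z + B (B X Z) Y := by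
  simp [leibnizator]

theorem leibniz_of_basis {ι : Type*} (b : Module.Basis ι R M) (B : M →ₗ[R] M →ₗ[R] M)
    (h : ∀ i j k, B (b i) (B (b j) (b k)) = B (B (b i) (b j)) (b k) - B (B (b i) (b k)) (b j))
    (X Y Z : M) : B X (B Y Z) = B (B X Y) Z - B (B X Z) Y := by
  have hB : leibnizator B = 0 :=
    b.ext fun i => b.ext fun j => b.ext fun k => by simp [leibnizator_apply, h]
  have hXYZ := leibnizator_apply B X Y Z
  rw [hB, LinearMap.zero_apply, LinearMap.zero_apply, LinearMap.zero_apply] at hXYZ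
  linear_combination (norm := module) -hXYZ

theorem forall_apply_eq_zero_of_basis {ι : Type*} (b : Module.Basis ι R M)
    (B : M →ₗ[R] M →ₗ[R] M) {Z : M} (hZ : ∀ i, B (b i) Z = 0) (X : M) : B X Z = 0 := by
  suffices B.flip Z = 0 from LinearMap.congr_fun this X
  exact b.ext hZ

theorem leibniz_of_right_annihilating {B : M →ₗ[R] M →ₗ[R] M} {Z : M} (hZ : ∀ X, B X Z = 0)
    (X Y : M) : B X (B Y Z) = B (B X Y) Z - B (B X Z) Y := by
  simp [hZ]

theorem leibniz_of_left_annihilating {B : M →ₗ[R] M →ₗ[R] M} {X : M} (hX : B X = 0) (Y Z : M) :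
    B X (B Y Z) = B (B X Y) Z - B (B X Z) Y := by
  simp [hX]

theorem leibniz_of_middle_right_annihilating {B : M →ₗ[R] M →ₗ[R] M} {Y Z : M}
    (hY : ∀ X, B X Y = 0) (hYZ : ∀ X, B X (B Y Z) = 0) (X : M) :
    B X (B Y Z) = B (B X Y) Z - B (B X Z) Y := by
  simp [hY, hYZ]

theorem leibniz_of_witt_bracket (B : M →ₗ[R] M →ₗ[R] M) (V U : ℤ → M) (c : M)
    (coef : ℤ → ℤ → R)
    (hcoef : ∀ a b d : ℤ, ((b : R) - d) * coef a (b + d - 1)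
      = ((a : R) - b) * coef (a + b - 1) d - ((a : R) - d) * coef (a + d - 1) b)
    (hVU : ∀ m n : ℤ, B (V m) (U n) = ((m : R) - n) • V (m + n - 1) + coef m n • c)
    (hUU : ∀ m n : ℤ, B (U m) (U n) = ((m : R) - n) • U (m + n - 1) + coef m n • c)
    (hc : B c = 0) (hc' : ∀ X, B X c = 0) (a b d : ℤ) :
    B (V a) (B (U b) (U d)) = B (B (V a) (U b)) (U d) - B (B (V a) (U d)) (U b) := by
  simp only [hUU, hVU, hc, hc', map_add, map_smul, LinearMap.smul_apply, smul_zero, add_zero]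
  rw [show a + (b + d - 1) - 1 = a + b + d - 2 by ring,
    show a + b - 1 + d - 1 = a + b + d - 2 by ring,
    show a + d - 1 + b - 1 = a + b + d - 2 by ring]
  match_scalars
  · ring
  · linear_combination hcoef a b d

end Leibniz

section Cocycle

variable {R : Type*} [CommRing R]

def coeffR00CentralCharge (β γ : R) (m n : ℤ) : R :=
  (if m + n = 0 then (m : R) * γ else 0)
    + (if m + n - 2 = 0 then (m : R) * ((m : R) - 1) * ((m : R) - 2) * β else 0)

theorem coeffR00CentralCharge_cocycle (β γ : R) (a b d : ℤ) :
    ((b : R) - d) * coeffR00CentralCharge β γ a (b + d - 1)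
      = ((a : R) - b) * coeffR00CentralCharge β γ (a + b - 1) d
        - ((a : R) - d) * coeffR00CentralCharge β γ (a + d - 1) b := by
  have hdb : a + b - 1 + d = a + (b + d - 1) := by ring
  have hbd : a + d - 1 + b = a + (b + d - 1) := by ring
  unfold coeffR00CentralCharge
  rw [hdb, hbd]
  split_ifs with h₀ h₂
  · omega
  · obtain rfl : d = 1 - a - b := by omega
    push_cast
    ring
  · obtain rfl : d = 3 - a - b := by omega
    push_cast
    ring
  · ring

end Cocycle

theorem single_one_eq_generator {R : Type*} [Semiring R] {L W : ℤ → Option (Fin 2 × ℤ) →₀ R}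
    {c : Option (Fin 2 × ℤ) →₀ R} (hL : ∀ n, L n = single (some (0, n)) 1)
    (hW : ∀ n, W n = single (some (1, n)) 1) (hc : c = single none 1) (x : Option (Fin 2 × ℤ)) :
    single x 1 = c ∨ (∃ n, single x 1 = L n) ∨ ∃ n, single x 1 = W n := by
  rcases x with _ | ⟨i, n⟩
  · exact Or.inl hc.symm
  · fin_cases i
    · exact Or.inr (Or.inl ⟨n, (hL n).symm⟩)
    · exact Or.inr (Or.inr ⟨n, (hW n).symm⟩)

/-- The central extension of `Coeff(R_{0,0})`: the free `ℂ`-module on symbols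
`L_n, W_n` (`n ∈ ℤ`) and a central element `c`, with
`[L_m,L_n] = [W_n,L_m] = 0`,
`[L_m,W_n] = (m-n)L_{m+n-1} + (mγδ_{m+n,0} + m(m-1)(m-2)βδ_{m+n-2,0})c`,
`[W_m,W_n] = (m-n)W_{m+n-1} + (mγδ_{m+n,0} + m(m-1)(m-2)βδ_{m+n-2,0})c`,
is a (right) Leibniz algebra for all `β, γ ∈ ℂ`. -/
theorem coeff_R00_central_extension_is_leibniz (β γ : ℂ)
    (B : (Option (Fin 2 × ℤ) →₀ ℂ) →ₗ[ℂ] (Option (Fin 2 × ℤ) →₀ ℂ) →ₗ[ℂ]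
      (Option (Fin 2 × ℤ) →₀ ℂ))
    (L W : ℤ → Option (Fin 2 × ℤ) →₀ ℂ) (c : Option (Fin 2 × ℤ) →₀ ℂ)
    (hLdef : ∀ n : ℤ, L n = single (some (0, n)) 1)
    (hWdef : ∀ n : ℤ, W n = single (some (1, n)) 1)
    (hcdef : c = single none 1)
    (coef : ℤ → ℤ → ℂ)
    (hcoef : ∀ m n : ℤ, coef m n
      = (if m + n = 0 then (m : ℂ) * γ else 0)
        + (if m + n - 2 = 0 then (m : ℂ) * ((m : ℂ) - 1) * ((m : ℂ) - 2) * β else 0))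
    (hLL : ∀ m n : ℤ, B (L m) (L n) = 0)
    (hWL : ∀ m n : ℤ, B (W n) (L m) = 0)
    (hLW : ∀ m n : ℤ, B (L m) (W n)
      = ((m : ℂ) - (n : ℂ)) • L (m + n - 1) + coef m n • c)
    (hWW : ∀ m n : ℤ, B (W m) (W n)
      = ((m : ℂ) - (n : ℂ)) • W (m + n - 1) + coef m n • c)
    (hcentral : ∀ X : Option (Fin 2 × ℤ) →₀ ℂ, B c X = 0 ∧ B X c = 0) :
    ∀ X Y Z : Option (Fin 2 × ℤ) →₀ ℂ, B X (B Y Z) = B (B X Y) Z - B (B X Z) Y := by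
  obtain rfl : coef = coeffR00CentralCharge β γ := funext₂ hcoef
  have hc : B c = 0 := LinearMap.ext fun X => (hcentral X).1
  have hc' : ∀ X, B X c = 0 := fun X => (hcentral X).2
  have generators := single_one_eq_generator hLdef hWdef hcdef
  have hL (n : ℤ) : ∀ X, B X (L n) = 0 :=
    forall_apply_eq_zero_of_basis Finsupp.basisSingleOne B fun x => by
      obtain hx | ⟨m, hx⟩ | ⟨m, hx⟩ := generators x <;> simp [hx, hc, hLL, hWL]
  have hLW_right : ∀ m n X, B X (B (L m) (W n)) = 0 := by
    simp [hLW, hL, hc']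
  refine leibniz_of_basis Finsupp.basisSingleOne B fun x y z => ?_
  simp only [Finsupp.coe_basisSingleOne]
  obtain hz | ⟨d, hz⟩ | ⟨d, hz⟩ := generators z
  · exact hz ▸ leibniz_of_right_annihilating hc' _ _
  · exact hz ▸ leibniz_of_right_annihilating (hL d) _ _
  obtain hy | ⟨b, hy⟩ | ⟨b, hy⟩ := generators y
  · exact hy ▸ leibniz_of_middle_right_annihilating hc' (by simp [hc]) _
  · exact hy ▸ hz ▸ leibniz_of_middle_right_annihilating (hL b) (hLW_right b d) _
  rw [hy, hz]
  obtain hx | ⟨a, hx⟩ | ⟨a, hx⟩ := generators x <;> rw [hx]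
  · exact leibniz_of_left_annihilating hc _ _
  · exact leibniz_of_witt_bracket B L W c _ (coeffR00CentralCharge_cocycle β γ) hLW hWW hc hc' ..
  · exact leibniz_of_witt_bracket B W W c _ (coeffR00CentralCharge_cocycle β γ) hWW hWW hc hc' ..
end

section
/- Let V be a vector space with bilinear ∘, [·,·] and assume conditions (r1)-(r5) of an ass-Nov-Leibniz algebra hold. Then the ℂ[∂]-module R = ℂ[∂] ⊗ V with λ-bracket [x_λ y] := ∂⊗(y∘x) + 2λ(1⊗(y∘x)) + 1⊗[y,x] for x,y ∈ V (extended by conformal sesquilinearity) satisfies the Leibniz conformal identity [x_λ[y_μ z]] = [[x_λ y]_{λ+μ} z] - [[x_λ z]_{-μ-∂} y] for all x,y,z ∈ V. -/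
open MvPolynomial TensorProduct

/-- Substitution of the variable `∂ = X 2` by `t` in `ℂ[λ, μ, ∂]`
(with `λ = X 0`, `μ = X 1`, `∂ = X 2`). -/
noncomputable def subD (t p : MvPolynomial (Fin 3) ℂ) : MvPolynomial (Fin 3) ℂ :=
  aeval (fun i : Fin 3 => if i = 2 then t else X i) p

/-!
Every term of the identity is additive in each of `X'`, `Y'`, `Z'`, so it suffices to take pure
tensors `p ⊗ x`, `q ⊗ y`, `r ⊗ z`. Once the nested substitutions of `∂` are composed, both sides
become `ℂ[λ, μ, ∂]`-combinations of iterated products of `x, y, z`. Conditions (r1)-(r5) and the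
Leibniz identity express each of these products through the six elements
`y ∘ (z ∘ x)`, `z ∘ [y, x]`, `y ∘ [z, x]`, `[y, z ∘ x]`, `[z, [y, x]]`, `[y, [z, x]]`,
and the identity then reduces to one polynomial identity for each of them.
-/

local notation "𝒫" => MvPolynomial (Fin 3) ℂ

@[simp] lemma subD_add (t p q : 𝒫) : subD t (p + q) = subD t p + subD t q := map_add _ _ _
@[simp] lemma subD_neg (t p : 𝒫) : subD t (-p) = -subD t p := map_neg _ _
@[simp] lemma subD_mul (t p q : 𝒫) : subD t (p * q) = subD t p * subD t q := map_mul _ _ _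
@[simp] lemma subD_ofNat (t : 𝒫) (n : ℕ) [n.AtLeastTwo] :
    subD t (no_index (OfNat.ofNat n)) = OfNat.ofNat n :=
  map_ofNat _ _
@[simp] lemma subD_X_two (t : 𝒫) : subD t (X 2) = t := by simp [subD]
@[simp] lemma subD_X_of_ne (t : 𝒫) {i : Fin 3} (hi : i ≠ 2) : subD t (X i) = X i := by
  simp [subD, hi]

lemma subD_subD (s t p : 𝒫) : subD s (subD t p) = subD (subD s t) p := by
  induction p using MvPolynomial.induction_on with
  | C a => simp [subD]
  | add p q hp hq => simp [hp, hq]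
  | mul_X p i hp =>
    rw [subD_mul, subD_mul, subD_mul, hp]
    fin_cases i <;> simp

structure IsAssNovLeibniz_s18 {V : Type*} [AddCommGroup V] [Module ℂ V]
    (circ br : V →ₗ[ℂ] V →ₗ[ℂ] V) : Prop where
  circ_assoc : ∀ x y z, circ (circ x y) z = circ x (circ y z)
  circ_left_comm : ∀ x y z, circ x (circ y z) = circ y (circ x z)
  br_leibniz : ∀ x y z, br x (br y z) = br (br x y) z + br y (br x z)
  two_smul_circ_br : ∀ x y z, (2 : ℂ) • circ x (br y z) = br (circ x y) z + br y (circ x z)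
  two_smul_br_circ : ∀ x y z, (2 : ℂ) • circ (br x y) z = br x (circ y z) - br y (circ x z)
  circ_br : ∀ x y z, circ (br x y) z = -circ x (br y z) + circ y (br x z)

namespace IsAssNovLeibniz_s18

variable {V : Type*} [AddCommGroup V] [Module ℂ V] {circ br : V →ₗ[ℂ] V →ₗ[ℂ] V}

lemma circ_circ_right_comm (hV : IsAssNovLeibniz_s18 circ br) (x y z : V) :
    circ (circ x y) z = circ y (circ x z) := by
  rw [hV.circ_assoc, hV.circ_left_comm]

lemma br_circ_left (hV : IsAssNovLeibniz_s18 circ br) (x y z : V) :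
    br (circ x y) z = (2 : ℂ) • circ x (br y z) - br y (circ x z) := by
  rw [hV.two_smul_circ_br]; abel

lemma br_br_left (hV : IsAssNovLeibniz_s18 circ br) (x y z : V) :
    br (br x y) z = br x (br y z) - br y (br x z) := by
  rw [hV.br_leibniz]; abel

lemma br_circ_right (hV : IsAssNovLeibniz_s18 circ br) (x y z : V) :
    br x (circ y z) = (2 : ℂ) • (-circ x (br y z) + circ y (br x z)) + br y (circ x z) := by
  rw [← hV.circ_br, hV.two_smul_br_circ]; abel

end IsAssNovLeibniz_s18

section ConformalBracket

variable {V : Type*} [AddCommGroup V] [Module ℂ V] {circ br : V →ₗ[ℂ] V →ₗ[ℂ] V}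
  {Br : 𝒫 → (𝒫 ⊗[ℂ] V) →ₗ[ℂ] (𝒫 ⊗[ℂ] V) →ₗ[ℂ] (𝒫 ⊗[ℂ] V)}

variable (circ br Br) in
def IsQuadraticBracket : Prop :=
  ∀ (ν p q : 𝒫) (x y : V), Br ν (p ⊗ₜ[ℂ] x) (q ⊗ₜ[ℂ] y)
    = (subD (-ν) p * subD (ν + X 2) q) • ((X 2 + 2 * ν) ⊗ₜ[ℂ] circ y x + (1 : 𝒫) ⊗ₜ[ℂ] br y x)

lemma IsQuadraticBracket.tmul_eq (hBr : IsQuadraticBracket circ br Br)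
    (ν p q : 𝒫) (x y : V) :
    Br ν (p ⊗ₜ[ℂ] x) (q ⊗ₜ[ℂ] y)
      = (subD (-ν) p * subD (ν + X 2) q * (X 2 + 2 * ν)) ⊗ₜ[ℂ] circ y x
        + (subD (-ν) p * subD (ν + X 2) q) ⊗ₜ[ℂ] br y x := by
  rw [hBr, smul_add, smul_tmul', smul_tmul', smul_eq_mul, smul_eq_mul, mul_one]

lemma leibniz_conformal_tmul (hV : IsAssNovLeibniz_s18 circ br)
    (hBr : IsQuadraticBracket circ br Br)
    (p q r : 𝒫) (x y z : V) :
    Br (X 0) (p ⊗ₜ x) (Br (X 1) (q ⊗ₜ y) (r ⊗ₜ z))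
      = Br (X 0 + X 1) (Br (X 0) (p ⊗ₜ x) (q ⊗ₜ y)) (r ⊗ₜ z)
        - Br (-(X 1) - X 2) (Br (X 0) (p ⊗ₜ x) (r ⊗ₜ z)) (q ⊗ₜ y) := by
  simp only [hBr.tmul_eq, map_add, LinearMap.add_apply, subD_subD, subD_add, subD_neg,
    subD_mul, subD_ofNat, subD_X_two, ne_eq, Fin.reduceEq, not_false_eq_true, subD_X_of_ne]
  -- normalises the composed substitution points, e.g. `X 1 + (X 0 + X 2)`, so that `module`
  -- recognises equal atoms on both sides
  ring_nf
  rw [hV.circ_circ_right_comm, hV.br_circ_left, hV.circ_br, hV.br_br_left, hV.circ_left_comm z y x,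
    hV.br_circ_right]
  simp only [two_smul, tmul_sub, tmul_add, tmul_neg]
  -- `mk` keeps `simp` from rewriting `1 ⊗ₜ v` again
  have tmul_eq_smul_mk : ∀ (P : 𝒫) (v : V), P ⊗ₜ[ℂ] v = P • mk ℂ 𝒫 V 1 v :=
    tmul_eq_smul_one_tmul
  simp only [tmul_eq_smul_mk]
  module

end ConformalBracket

lemma leibniz_conformal_of_tmul {V : Type*} [AddCommGroup V] [Module ℂ V]
    (Br : 𝒫 → (𝒫 ⊗[ℂ] V) →ₗ[ℂ] (𝒫 ⊗[ℂ] V) →ₗ[ℂ] (𝒫 ⊗[ℂ] V))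
    (h : ∀ (p q r : 𝒫) (x y z : V),
      Br (X 0) (p ⊗ₜ x) (Br (X 1) (q ⊗ₜ y) (r ⊗ₜ z))
        = Br (X 0 + X 1) (Br (X 0) (p ⊗ₜ x) (q ⊗ₜ y)) (r ⊗ₜ z)
          - Br (-(X 1) - X 2) (Br (X 0) (p ⊗ₜ x) (r ⊗ₜ z)) (q ⊗ₜ y))
    (A B C : 𝒫 ⊗[ℂ] V) :
    Br (X 0) A (Br (X 1) B C)
      = Br (X 0 + X 1) (Br (X 0) A B) C - Br (-(X 1) - X 2) (Br (X 0) A C) B := by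
  induction A using TensorProduct.induction_on with
  | zero => simp
  | add A A' hA hA' => simp only [map_add, LinearMap.add_apply, hA, hA']; abel
  | tmul p x =>
    induction B using TensorProduct.induction_on with
    | zero => simp
    | add B B' hB hB' => simp only [map_add, LinearMap.add_apply, hB, hB']; abel
    | tmul q y =>
      induction C using TensorProduct.induction_on with
      | zero => simp
      | add C C' hC hC' => simp only [map_add, LinearMap.add_apply, hC, hC']; abel
      | tmul r z => exact h p q r x y z

/-- Theorem 3.2 / Corollary 3.4 direction: given an ass-Nov-Leibniz structure
`(V, ∘, [·,·])` (conditions (r1)-(r5) plus the left Leibniz identity), the free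
`ℂ[∂]`-module `R = ℂ[∂] ⊗ V` (here embedded in `ℂ[λ,μ,∂] ⊗ V`) with λ-bracket
`[x_λ y] = ∂⊗(y∘x) + 2λ(1⊗(y∘x)) + 1⊗[y,x]`, extended by conformal
sesquilinearity, satisfies the Leibniz conformal identity. -/
theorem quadratic_leibniz_conformal_of_ass_nov_leibniz
    {V : Type*} [AddCommGroup V] [Module ℂ V]
    (circ br : V →ₗ[ℂ] V →ₗ[ℂ] V)
    -- (r1), (r2)
    (h1 : ∀ x y z : V, circ (circ x y) z = circ x (circ y z))
    (h2 : ∀ x y z : V, circ x (circ y z) = circ y (circ x z))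
    -- left Leibniz identity
    (hLeib : ∀ x y z : V, br x (br y z) = br (br x y) z + br y (br x z))
    -- (r3), (r4), (r5)
    (h3 : ∀ x y z : V, (2:ℂ) • circ x (br y z) = br (circ x y) z + br y (circ x z))
    (h4 : ∀ x y z : V, (2:ℂ) • circ (br x y) z = br x (circ y z) - br y (circ x z))
    (h5 : ∀ x y z : V, circ (br x y) z = -circ x (br y z) + circ y (br x z))
    -- the ν-bracket on ℂ[λ,μ,∂] ⊗ V, for a formal parameter ν
    (Br : MvPolynomial (Fin 3) ℂ →
      (MvPolynomial (Fin 3) ℂ ⊗[ℂ] V) →ₗ[ℂ]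
      (MvPolynomial (Fin 3) ℂ ⊗[ℂ] V) →ₗ[ℂ] (MvPolynomial (Fin 3) ℂ ⊗[ℂ] V))
    (hBr : ∀ (ν p q : MvPolynomial (Fin 3) ℂ) (x y : V),
      Br ν (p ⊗ₜ[ℂ] x) (q ⊗ₜ[ℂ] y)
        = (subD (-ν) p * subD (ν + X 2) q) •
            ((X 2 + 2 * ν) ⊗ₜ[ℂ] circ y x + (1 : MvPolynomial (Fin 3) ℂ) ⊗ₜ[ℂ] br y x)) :
    ∀ X' Y' Z' : MvPolynomial (Fin 3) ℂ ⊗[ℂ] V,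
      Br (X 0) X' (Br (X 1) Y' Z')
        = Br (X 0 + X 1) (Br (X 0) X' Y') Z'
          - Br (-(X 1) - X 2) (Br (X 0) X' Z') Y' := by
  exact leibniz_conformal_of_tmul Br
    (leibniz_conformal_tmul ⟨h1, h2, hLeib, h3, h4, h5⟩ hBr)
end
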